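/- The ε-product fails the C*-identity: if v ∈ H is a unit vector and A is the bounded operator on H̃ defined by A(z,λ) = (⟨v,z⟩·v, ⟨v,z⟩), then A ≠ 0, A* ∘ ε ∘ A = 0, and A* ∘ A = 2·Ẽ where Ẽ(z,λ) = (⟨v,z⟩·v, 0), so that ‖A‖² = 2; in particular ‖A* ∗ε A‖ = 0 ≠ ‖A‖². -/

import Mathlib

/-- The extended Hilbert space `H̃ = H ⊕ ℂ` (Hilbert space direct sum). -/
noncomputable abbrev ExtH (H : Type*) [NormedAddCommGroup H] [InnerProductSpace ℂ H] :=
  WithLp 2 (H × ℂ)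

/-- The element `(z, a)` of `H̃`. -/
noncomputable def mk2 {H : Type*} [NormedAddCommGroup H] [InnerProductSpace ℂ H]
    (z : H) (a : ℂ) : ExtH H :=
  (WithLp.equiv 2 (H × ℂ)).symm (z, a)

/-! With `Ẽ` the orthogonal projection onto `ℂ(v,0)`, one computes `A* ∘ A = 2Ẽ`, while inserting
`ε` flips the sign of the `H`-component and makes the two contributions `⟨v,z⟩` cancel, so
`A* ∘ ε ∘ A = 0`. The C*-identity for the ordinary product then gives `‖A‖² = ‖A* ∘ A‖ = 2‖Ẽ‖ = 2`. -/

open ContinuousLinearMap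

namespace ContinuousLinearMap

variable {𝕜 E F : Type*} [RCLike 𝕜] [NormedAddCommGroup E] [InnerProductSpace 𝕜 E]
  [NormedAddCommGroup F] [InnerProductSpace 𝕜 F] [CompleteSpace E] [CompleteSpace F]

theorem adjoint_comp_eq_of_forall_inner {T S : E →L[𝕜] F} {R : E →L[𝕜] E}
    (h : ∀ x y, inner 𝕜 (T y) (S x) = inner 𝕜 y (R x)) : adjoint T ∘L S = R := by
  ext x
  refine ext_inner_left 𝕜 fun y => ?_
  rw [comp_apply, adjoint_inner_right, h]

end ContinuousLinearMap

theorem norm_inner_smul_le_of_norm_eq_one {𝕜 F : Type*} [RCLike 𝕜] [NormedAddCommGroup F]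
    [InnerProductSpace 𝕜 F] {v : F} (hv : ‖v‖ = 1) (z : F) : ‖inner 𝕜 v z • v‖ ≤ ‖z‖ := by
  simpa [norm_smul, hv] using norm_inner_le_norm (𝕜 := 𝕜) v z

section ExtH

variable {H : Type*} [NormedAddCommGroup H] [InnerProductSpace ℂ H]

theorem forall_mk2 {p : ExtH H → Prop} : (∀ x, p x) ↔ ∀ z l, p (mk2 z l) :=
  ⟨fun h _ _ => h _, fun h x => h x.fst x.snd⟩

theorem inner_mk2_mk2 (z w : H) (a b : ℂ) :
    inner ℂ (mk2 z a) (mk2 w b) = inner ℂ z w + starRingEnd ℂ a * b := by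
  rw [WithLp.prod_inner_apply]
  change inner ℂ z w + inner ℂ a b = _
  rw [RCLike.inner_apply]
  ring

theorem norm_mk2_sq (z : H) (a : ℂ) : ‖mk2 z a‖ ^ 2 = ‖z‖ ^ 2 + ‖a‖ ^ 2 :=
  WithLp.prod_norm_sq_eq_of_L2 _

theorem norm_mk2_le_of_norm_le {z w : H} (h : ‖z‖ ≤ ‖w‖) (b : ℂ) : ‖mk2 z 0‖ ≤ ‖mk2 w b‖ := by
  rw [← pow_le_pow_iff_left₀ (norm_nonneg _) (norm_nonneg _) two_ne_zero, norm_mk2_sq,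
    norm_mk2_sq, norm_zero]
  linarith [pow_le_pow_left₀ (norm_nonneg _) h 2, sq_nonneg ‖b‖]

end ExtH

section UnitVector

variable {H : Type*} [NormedAddCommGroup H] [InnerProductSpace ℂ H] {v : H}

theorem norm_eq_one_of_apply_mk2_eq_inner_smul (hv : ‖v‖ = 1) {E : ExtH H →L[ℂ] ExtH H}
    (hE : ∀ z l, E (mk2 z l) = mk2 (inner ℂ v z • v) 0) : ‖E‖ = 1 := by
  have hv0 : ‖mk2 v 0‖ = 1 := by
    rw [← pow_eq_one_iff_of_nonneg (norm_nonneg _) two_ne_zero, norm_mk2_sq, hv]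
    norm_num
  refine le_antisymm (opNorm_le_bound _ zero_le_one <| forall_mk2.2 fun z l => ?_) ?_
  · rw [hE, one_mul]
    exact norm_mk2_le_of_norm_le (norm_inner_smul_le_of_norm_eq_one hv z) l
  · calc (1 : ℝ) = ‖E (mk2 v 0)‖ := by
          rw [hE, inner_self_eq_one_of_norm_eq_one hv, one_smul, hv0]
      _ ≤ ‖E‖ := by simpa [hv0] using E.le_opNorm (mk2 v 0)

variable [CompleteSpace H]

theorem adjoint_comp_eps_comp_eq_zero (hv : ‖v‖ = 1) {ε A : ExtH H →L[ℂ] ExtH H}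
    (hε : ∀ z l, ε (mk2 z l) = mk2 (-z) l)
    (hA : ∀ z l, A (mk2 z l) = mk2 (inner ℂ v z • v) (inner ℂ v z)) :
    adjoint A ∘L ε ∘L A = 0 := by
  refine adjoint_comp_eq_of_forall_inner <| forall_mk2.2 fun z l => forall_mk2.2 fun w m => ?_
  rw [comp_apply, hA, hA, hε, inner_mk2_mk2, inner_neg_right, inner_smul_left, inner_smul_right,
    inner_self_eq_one_of_norm_eq_one hv, zero_apply, inner_zero_right]
  ring

theorem adjoint_comp_self_eq_two_smul (hv : ‖v‖ = 1) {A E : ExtH H →L[ℂ] ExtH H}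
    (hA : ∀ z l, A (mk2 z l) = mk2 (inner ℂ v z • v) (inner ℂ v z))
    (hE : ∀ z l, E (mk2 z l) = mk2 (inner ℂ v z • v) 0) :
    adjoint A ∘L A = (2 : ℂ) • E := by
  refine adjoint_comp_eq_of_forall_inner <| forall_mk2.2 fun z l => forall_mk2.2 fun w m => ?_
  simp only [hA, smul_apply, hE, inner_smul_right, inner_mk2_mk2, inner_smul_left, inner_conj_symm,
    inner_self_eq_one_of_norm_eq_one hv]
  ring

end UnitVector

/-- the ε-product fails the C*-identity: for a unit vector `v ∈ H`, the
operator `A(z,λ) = (⟨v,z⟩v, ⟨v,z⟩)` on `H̃` satisfies `A ≠ 0`, `A* ∘ ε ∘ A = 0`,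
`A* ∘ A = 2Ẽ` with `Ẽ(z,λ) = (⟨v,z⟩v, 0)`, hence `‖A‖² = 2` while `‖A* ∗ε A‖ = 0`. -/
theorem eps_product_fails_cstar_identity
    {H : Type*} [NormedAddCommGroup H] [InnerProductSpace ℂ H] [CompleteSpace H]
    (ε : ExtH H →L[ℂ] ExtH H) (hε : ∀ (z : H) (l : ℂ), ε (mk2 z l) = mk2 (-z) l)
    (v : H) (hv : ‖v‖ = 1)
    (A : ExtH H →L[ℂ] ExtH H)
    (hA : ∀ (z : H) (l : ℂ), A (mk2 z l) = mk2 ((inner ℂ v z : ℂ) • v) (inner ℂ v z : ℂ))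
    (E : ExtH H →L[ℂ] ExtH H)
    (hE : ∀ (z : H) (l : ℂ), E (mk2 z l) = mk2 ((inner ℂ v z : ℂ) • v) 0) :
    A ≠ 0 ∧
    adjoint A ∘L ε ∘L A = 0 ∧
    adjoint A ∘L A = (2 : ℂ) • E ∧
    ‖A‖ ^ 2 = 2 ∧
    ‖adjoint A ∘L ε ∘L A‖ = 0 ∧
    ‖adjoint A ∘L ε ∘L A‖ ≠ ‖A‖ ^ 2 := by
  have hA0 : A ≠ 0 := fun h => by
    simpa [h, mk2, hv] using congrArg WithLp.snd (hA v 0)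
  have hεA := adjoint_comp_eps_comp_eq_zero hv hε hA
  have hAA := adjoint_comp_self_eq_two_smul hv hA hE
  have hAnorm : ‖A‖ ^ 2 = 2 := by
    rw [sq, ← norm_adjoint_comp_self, hAA, norm_smul, norm_eq_one_of_apply_mk2_eq_inner_smul hv hE]
    norm_num
  refine ⟨hA0, hεA, hAA, hAnorm, by rw [hεA, norm_zero], ?_⟩
  rw [hεA, norm_zero, hAnorm]
  exact two_ne_zero.symm
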